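/- Let φ : M → N be a 3-harmonic map, expressed in local charts (U, x^i) on M and (V, y^α) on N with φ(U) ⊂ V. Then the equation τ₃(φ) = 0 is locally equivalent to the system Δu₁^α = (F³)^α, where (F³)^α = −A₂^α − g^{ij} u₁^ϑ φ_i^β φ_j^ω R^α_{ωβϑ} + g^{ij} v₀ᵢ^β u₀^ϑ φ_j^ω R^α_{ωβϑ} + g^{ij} u₀^σ u₀^ϑ φ_i^γ φ_j^ω Γ^β_{γσ} R^α_{ωβϑ}. Moreover, on any open set D whose closure is compact and contained in U, there exists a constant C > 0 such that |F³| ≤ C( Σ_ϑ (|u₀^ϑ| + |u₁^ϑ|) + Σ_{i,ϑ} |v₀ᵢ^ϑ| + Σ_{i,ϑ} |∂u₁^ϑ/∂x^i| ). -/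
import Mathlib

noncomputable section

open scoped BigOperators

namespace Polyharm

/-- Partial derivative of a scalar function on `ℝ^d` in the `i`-th coordinate direction. -/
def pd {d : ℕ} (i : Fin d) (f : (Fin d → ℝ) → ℝ) (x : Fin d → ℝ) : ℝ :=
  fderiv ℝ f x (Pi.single i 1)

/-- Euclidean norm of a finite family of real numbers. -/
def vnorm {ι : Type} [Fintype ι] (f : ι → ℝ) : ℝ :=
  Real.sqrt (∑ i, f i ^ 2)

/-- Local-coordinate data for maps between Riemannian manifolds: the inverse metric
`g^{ij}` and the Christoffel symbols `Γ^k_{ij}` of a chart of the domain `(M,g)`, and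
the Christoffel symbols `Γ^α_{βγ}` of a chart of the target `(N,h)`. -/
structure ChartData (m n : ℕ) where
  ginv : (Fin m → ℝ) → Fin m → Fin m → ℝ
  ΓM : (Fin m → ℝ) → Fin m → Fin m → Fin m → ℝ
  ΓN : (Fin n → ℝ) → Fin n → Fin n → Fin n → ℝ

variable {m n : ℕ}

/-- Smoothness of the domain data. -/
def ChartData.SmoothDomain (P : ChartData m n) : Prop :=
  (∀ i j, ContDiff ℝ (⊤ : ℕ∞) fun x => P.ginv x i j) ∧
  (∀ k i j, ContDiff ℝ (⊤ : ℕ∞) fun x => P.ΓM x k i j)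

/-- Smoothness of the target Christoffel symbols. -/
def ChartData.SmoothTarget (P : ChartData m n) : Prop :=
  ∀ α β γ, ContDiff ℝ (⊤ : ℕ∞) fun y => P.ΓN y α β γ

/-- The chart data comes from Riemannian metrics: `g^{ij}` is symmetric and positive
definite, and the Christoffel symbols are symmetric in their lower indices. -/
def ChartData.Riemannian (P : ChartData m n) : Prop :=
  (∀ x i j, P.ginv x i j = P.ginv x j i) ∧
  (∀ x (v : Fin m → ℝ), v ≠ 0 → 0 < ∑ i, ∑ j, P.ginv x i j * v i * v j) ∧
  (∀ x k i j, P.ΓM x k i j = P.ΓM x k j i) ∧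
  (∀ y α β γ, P.ΓN y α β γ = P.ΓN y α γ β)

/-- The Laplace–Beltrami operator on scalar functions:
`-Δ f = g^{ij} ∂²f/∂x^i∂x^j - g^{ij} Γ^k_{ij} ∂f/∂x^k`. -/
def lap (P : ChartData m n) (f : (Fin m → ℝ) → ℝ) (x : Fin m → ℝ) : ℝ :=
  -((∑ i, ∑ j, P.ginv x i j * pd i (fun z => pd j f z) x)
    - ∑ i, ∑ j, ∑ k, P.ginv x i j * P.ΓM x k i j * pd k f x)

/-- `φ_i^β = ∂φ^β/∂x^i`. -/
def dphi (φ : (Fin m → ℝ) → Fin n → ℝ) (x : Fin m → ℝ) (i : Fin m) (β : Fin n) : ℝ :=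
  pd i (fun z => φ z β) x

/-- `⟨dφ^β, dψ^γ⟩ = g^{ij} φ_i^β ψ_j^γ`. -/
def dpair (P : ChartData m n) (φ ψ : (Fin m → ℝ) → Fin n → ℝ) (x : Fin m → ℝ)
    (β γ : Fin n) : ℝ :=
  ∑ i, ∑ j, P.ginv x i j * dphi φ x i β * dphi ψ x j γ

/-- Components `R^α_{δβγ}` of the curvature tensor of the target, with the sign
convention `R(∂/∂y^β, ∂/∂y^γ)∂/∂y^δ = R^α_{δβγ} ∂/∂y^α` of the paper. -/
def Rc (P : ChartData m n) (y : Fin n → ℝ) (α δ β γ : Fin n) : ℝ :=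
  pd β (fun z => P.ΓN z α γ δ) y - pd γ (fun z => P.ΓN z α β δ) y
    + ∑ μ, (P.ΓN y α β μ * P.ΓN y μ γ δ - P.ΓN y α γ μ * P.ΓN y μ β δ)

/-- `2S^α_{βωϑ} = ∂Γ^α_{βϑ}/∂y^ω + Γ^γ_{βϑ}Γ^α_{ωγ} + ∂Γ^α_{ωϑ}/∂y^β + Γ^γ_{ωϑ}Γ^α_{βγ}`. -/
def Scoef (P : ChartData m n) (y : Fin n → ℝ) (α β ω ϑ : Fin n) : ℝ :=
  (pd ω (fun z => P.ΓN z α β ϑ) y + (∑ γ, P.ΓN y γ β ϑ * P.ΓN y α ω γ)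
    + pd β (fun z => P.ΓN z α ω ϑ) y + ∑ γ, P.ΓN y γ ω ϑ * P.ΓN y α β γ) / 2

/-- The operator
`A^α(η,ξ) = ξ_i^ϑ(-2 g^{ij} φ_j^β Γ^α_{βϑ}) + η^ϑ((Δφ^β)Γ^α_{βϑ} - g^{ij} φ_j^β φ_i^ω S^α_{βωϑ})`. -/
def Aop (P : ChartData m n) (φ : (Fin m → ℝ) → Fin n → ℝ) (η : Fin n → ℝ)
    (ξ : Fin m → Fin n → ℝ) (x : Fin m → ℝ) (α : Fin n) : ℝ :=
  (∑ ϑ, ∑ i, ξ i ϑ * (-2 * ∑ j, ∑ β, P.ginv x i j * dphi φ x j β * P.ΓN (φ x) α β ϑ))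
    + ∑ ϑ, η ϑ * ((∑ β, lap P (fun z => φ z β) x * P.ΓN (φ x) α β ϑ)
        - ∑ i, ∑ j, ∑ β, ∑ ω,
            P.ginv x i j * dphi φ x j β * dphi φ x i ω * Scoef P (φ x) α β ω ϑ)

/-- The operator `A` applied to (the components of) a section `σ` of `φ⁻¹TN`:
`A(σ, ∂σ)`. -/
def Asec (P : ChartData m n) (φ σ : (Fin m → ℝ) → Fin n → ℝ) (x : Fin m → ℝ)
    (α : Fin n) : ℝ :=
  Aop P φ (σ x) (fun i ϑ => pd i (fun z => σ z ϑ) x) x α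

/-- Components of the tension field `τ^α(φ) = -Δφ^α + g^{ij} Γ^α_{ϑβ} φ_i^ϑ φ_j^β`. -/
def tension (P : ChartData m n) (φ : (Fin m → ℝ) → Fin n → ℝ) (x : Fin m → ℝ)
    (α : Fin n) : ℝ :=
  -(lap P (fun z => φ z α) x)
    + ∑ i, ∑ j, ∑ ϑ, ∑ β,
        P.ginv x i j * P.ΓN (φ x) α ϑ β * dphi φ x i ϑ * dphi φ x j β

/-- The components `u_j` of `Δ̄^j τ(φ)`: `u_0 = τ(φ)` and
`u_{j+1} = Δ u_j + A(u_j, ∂u_j)` (local expression of the rough Laplacian). -/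
def uvar (P : ChartData m n) (φ : (Fin m → ℝ) → Fin n → ℝ) :
    ℕ → (Fin m → ℝ) → Fin n → ℝ
  | 0 => tension P φ
  | j+1 => fun x α => lap P (fun z => uvar P φ j z α) x + Asec P φ (uvar P φ j) x α

/-- `v_j = du_j`, i.e. `v_{j i}^α = ∂u_j^α/∂x^i`. -/
def vvar (P : ChartData m n) (φ : (Fin m → ℝ) → Fin n → ℝ) (j : ℕ) (x : Fin m → ℝ)
    (i : Fin m) (α : Fin n) : ℝ :=
  pd i (fun z => uvar P φ j z α) x

/-- Components of the pull-back covariant derivative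
`(∇̄_{∂_i} σ)^γ = ∂σ^γ/∂x^i + Γ^γ_{βδ}(φ) φ_i^β σ^δ`. -/
def covD (P : ChartData m n) (φ σ : (Fin m → ℝ) → Fin n → ℝ) (i : Fin m)
    (x : Fin m → ℝ) (γ : Fin n) : ℝ :=
  pd i (fun z => σ z γ) x + ∑ β, ∑ δ, P.ΓN (φ x) γ β δ * dphi φ x i β * σ x δ

/-- `(Tr_g R^N(X, dφ(·))dφ(·))^α`. -/
def trRphi (P : ChartData m n) (φ X : (Fin m → ℝ) → Fin n → ℝ) (x : Fin m → ℝ)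
    (α : Fin n) : ℝ :=
  ∑ i, ∑ j, ∑ β, ∑ γ, ∑ δ,
    P.ginv x i j * Rc P (φ x) α δ β γ * X x β * dphi φ x i γ * dphi φ x j δ

/-- `(Tr_g R^N(dφ(·), X)dφ(·))^α`. -/
def trRphi2 (P : ChartData m n) (φ X : (Fin m → ℝ) → Fin n → ℝ) (x : Fin m → ℝ)
    (α : Fin n) : ℝ :=
  ∑ i, ∑ j, ∑ β, ∑ γ, ∑ δ,
    P.ginv x i j * Rc P (φ x) α δ β γ * dphi φ x i β * X x γ * dphi φ x j δ

/-- `(Tr_g R^N(∇̄_{(·)}W, Z)dφ(·))^α`. -/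
def trRD (P : ChartData m n) (φ W Z : (Fin m → ℝ) → Fin n → ℝ) (x : Fin m → ℝ)
    (α : Fin n) : ℝ :=
  ∑ i, ∑ j, ∑ β, ∑ γ, ∑ δ,
    P.ginv x i j * Rc P (φ x) α δ β γ * covD P φ W i x β * Z x γ * dphi φ x j δ

/-- `(Tr_g R^N(W, ∇̄_{(·)}Z)dφ(·))^α`. -/
def trRD2 (P : ChartData m n) (φ W Z : (Fin m → ℝ) → Fin n → ℝ) (x : Fin m → ℝ)
    (α : Fin n) : ℝ :=
  ∑ i, ∑ j, ∑ β, ∑ γ, ∑ δ,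
    P.ginv x i j * Rc P (φ x) α δ β γ * W x β * covD P φ Z i x γ * dphi φ x j δ

/-- Local components of Maeta's `k`-tension field `τ_k(φ)`, for `k = 2s`:
`τ_{2s}(φ) = Δ̄^{2s-1}τ(φ) - R^N(Δ̄^{2s-2}τ(φ), dφ(e_j))dφ(e_j)
  - Σ_{ℓ=1}^{s-1}( R^N(∇̄_{e_j}Δ̄^{s+ℓ-2}τ(φ), Δ̄^{s-ℓ-1}τ(φ))dφ(e_j)
                 - R^N(Δ̄^{s+ℓ-2}τ(φ), ∇̄_{e_j}Δ̄^{s-ℓ-1}τ(φ))dφ(e_j) )`,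
and for `k = 2s+1`:
`τ_{2s+1}(φ) = Δ̄^{2s}τ(φ) - R^N(Δ̄^{2s-1}τ(φ), dφ(e_j))dφ(e_j)
  - Σ_{ℓ=1}^{s-1}( R^N(∇̄_{e_j}Δ̄^{s+ℓ-1}τ(φ), Δ̄^{s-ℓ-1}τ(φ))dφ(e_j)
                 - R^N(Δ̄^{s+ℓ-1}τ(φ), ∇̄_{e_j}Δ̄^{s-ℓ-1}τ(φ))dφ(e_j) )
  - R^N(∇̄_{e_j}Δ̄^{s-1}τ(φ), Δ̄^{s-1}τ(φ))dφ(e_j)`. -/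
def tauK (P : ChartData m n) (φ : (Fin m → ℝ) → Fin n → ℝ) (k : ℕ) (x : Fin m → ℝ)
    (α : Fin n) : ℝ :=
  if Even k then
    uvar P φ (k-1) x α - trRphi P φ (uvar P φ (k-2)) x α
      - ∑ ℓ ∈ Finset.Icc 1 (k/2 - 1),
          (trRD P φ (uvar P φ (k/2 + ℓ - 2)) (uvar P φ (k/2 - ℓ - 1)) x α
            - trRD2 P φ (uvar P φ (k/2 + ℓ - 2)) (uvar P φ (k/2 - ℓ - 1)) x α)
  else
    uvar P φ (k-1) x α - trRphi P φ (uvar P φ (k-2)) x α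
      - (∑ ℓ ∈ Finset.Icc 1 (k/2 - 1),
          (trRD P φ (uvar P φ (k/2 + ℓ - 1)) (uvar P φ (k/2 - ℓ - 1)) x α
            - trRD2 P φ (uvar P φ (k/2 + ℓ - 1)) (uvar P φ (k/2 - ℓ - 1)) x α))
      - trRD P φ (uvar P φ (k/2 - 1)) (uvar P φ (k/2 - 1)) x α

/-- Components `(∇dφ)(∂_i,∂_j)^α` of the second fundamental form of `φ`. -/
def sff (P : ChartData m n) (φ : (Fin m → ℝ) → Fin n → ℝ) (x : Fin m → ℝ)
    (i j : Fin m) (α : Fin n) : ℝ :=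
  pd i (fun z => dphi φ z j α) x - (∑ k, P.ΓM x k i j * dphi φ x k α)
    + ∑ β, ∑ γ, P.ΓN (φ x) α β γ * dphi φ x i β * dphi φ x j γ

/-- The explicit local right-hand side `F³` of the triharmonic map equation
`Δu₁^α = (F³)^α`:
`(F³)^α = -A₂^α - g^{ij}u₁^ϑ φ_i^β φ_j^ω R^α_{ωβϑ} + g^{ij}v₀ᵢ^β u₀^ϑ φ_j^ω R^α_{ωβϑ}
  + g^{ij}u₀^σ u₀^ϑ φ_i^γ φ_j^ω Γ^β_{γσ} R^α_{ωβϑ}`. -/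
def F3 (P : ChartData m n) (φ : (Fin m → ℝ) → Fin n → ℝ) (x : Fin m → ℝ)
    (α : Fin n) : ℝ :=
  -Asec P φ (uvar P φ 1) x α
    - (∑ i, ∑ j, ∑ ϑ, ∑ β, ∑ ω,
        P.ginv x i j * uvar P φ 1 x ϑ * dphi φ x i β * dphi φ x j ω *
          Rc P (φ x) α ω β ϑ)
    + (∑ i, ∑ j, ∑ β, ∑ ϑ, ∑ ω,
        P.ginv x i j * vvar P φ 0 x i β * uvar P φ 0 x ϑ * dphi φ x j ω *
          Rc P (φ x) α ω β ϑ)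
    + ∑ i, ∑ j, ∑ σ, ∑ ϑ, ∑ γ, ∑ ω, ∑ β,
        P.ginv x i j * uvar P φ 0 x σ * uvar P φ 0 x ϑ * dphi φ x i γ *
          dphi φ x j ω * P.ΓN (φ x) β γ σ * Rc P (φ x) α ω β ϑ


/-! ### Auxiliary lemmas -/

section Aux

lemma contDiff_pd {d : ℕ} {f : (Fin d → ℝ) → ℝ} (hf : ContDiff ℝ (⊤ : ℕ∞) f) (i : Fin d) :
    ContDiff ℝ (⊤ : ℕ∞) (pd i f) := by
  have h : pd i f = fun x => fderiv ℝ f x (Pi.single i 1) := rfl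
  rw [h]
  exact (hf.fderiv_right (by simp)).clm_apply contDiff_const

lemma Rc_antisymm (P : ChartData m n) (y : Fin n → ℝ) (a d b c : Fin n) :
    Rc P y a d b c = -Rc P y a d c b := by
  unfold Rc
  rw [neg_add, ← Finset.sum_neg_distrib]
  congr 1
  · ring
  · exact Finset.sum_congr rfl fun μ _ => by ring

lemma nest5 {κ : Type*} [Fintype κ] (f : κ → κ → κ → κ → κ → ℝ) :
    (∑ p : κ × κ × κ × κ × κ, f p.1 p.2.1 p.2.2.1 p.2.2.2.1 p.2.2.2.2)
      = ∑ a, ∑ b, ∑ c, ∑ d, ∑ e, f a b c d e := by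
  simp [Fintype.sum_prod_type]

lemma sum5_comm {κ : Type*} [Fintype κ] (f : κ → κ → κ → κ → κ → ℝ) :
    (∑ a, ∑ b, ∑ c, ∑ d, ∑ e, f a b c d e)
      = ∑ e, ∑ b, ∑ d, ∑ c, ∑ a, f a b c d e := by
  rw [← nest5 f, ← nest5 (fun e b d c a => f a b c d e)]
  exact Fintype.sum_equiv
    ⟨fun p => (p.2.2.2.2, p.2.1, p.2.2.2.1, p.2.2.1, p.1),
     fun p => (p.2.2.2.2, p.2.1, p.2.2.2.1, p.2.2.1, p.1),
     fun _ => rfl, fun _ => rfl⟩ _ _ (fun _ => rfl)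

lemma trRphi_eq (P : ChartData m n) (φ X : (Fin m → ℝ) → Fin n → ℝ) (x : Fin m → ℝ)
    (α : Fin n) :
    trRphi P φ X x α
      = -∑ i, ∑ j, ∑ ϑ, ∑ β, ∑ ω,
          P.ginv x i j * X x ϑ * dphi φ x i β * dphi φ x j ω * Rc P (φ x) α ω β ϑ := by
  unfold trRphi
  rw [← Finset.sum_neg_distrib]
  refine Finset.sum_congr rfl fun i _ => ?_
  rw [← Finset.sum_neg_distrib]
  refine Finset.sum_congr rfl fun j _ => ?_
  rw [← Finset.sum_neg_distrib]
  refine Finset.sum_congr rfl fun a _ => ?_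
  rw [← Finset.sum_neg_distrib]
  refine Finset.sum_congr rfl fun b _ => ?_
  rw [← Finset.sum_neg_distrib]
  refine Finset.sum_congr rfl fun c _ => ?_
  rw [Rc_antisymm P (φ x) α c a b]
  ring

lemma trRD_eq (P : ChartData m n) (φ W : (Fin m → ℝ) → Fin n → ℝ) (x : Fin m → ℝ)
    (α : Fin n) :
    trRD P φ W W x α
      = (∑ i, ∑ j, ∑ β, ∑ ϑ, ∑ ω,
          P.ginv x i j * pd i (fun z => W z β) x * W x ϑ * dphi φ x j ω *
            Rc P (φ x) α ω β ϑ)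
        + ∑ i, ∑ j, ∑ σ, ∑ ϑ, ∑ γ, ∑ ω, ∑ β,
            P.ginv x i j * W x σ * W x ϑ * dphi φ x i γ * dphi φ x j ω *
              P.ΓN (φ x) β γ σ * Rc P (φ x) α ω β ϑ := by
  unfold trRD
  rw [← Finset.sum_add_distrib]
  refine Finset.sum_congr rfl fun i _ => ?_
  rw [← Finset.sum_add_distrib]
  refine Finset.sum_congr rfl fun j _ => ?_
  have expand : ∀ β γ δ : Fin n,
      P.ginv x i j * Rc P (φ x) α δ β γ * covD P φ W i x β * W x γ * dphi φ x j δ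
        = (P.ginv x i j * pd i (fun z => W z β) x * W x γ * dphi φ x j δ *
            Rc P (φ x) α δ β γ)
          + ∑ p, ∑ q,
              P.ginv x i j * W x q * W x γ * dphi φ x i p * dphi φ x j δ *
                P.ΓN (φ x) β p q * Rc P (φ x) α δ β γ := by
    intro β γ δ
    unfold covD
    rw [mul_add, add_mul, add_mul]
    congr 1
    · ring
    · simp only [Finset.mul_sum, Finset.sum_mul]
      exact Finset.sum_congr rfl fun p _ => Finset.sum_congr rfl fun q _ => by ring
  calc (∑ β, ∑ γ, ∑ δ,
        P.ginv x i j * Rc P (φ x) α δ β γ * covD P φ W i x β * W x γ * dphi φ x j δ)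
      = ∑ β, ∑ γ, ∑ δ,
          ((P.ginv x i j * pd i (fun z => W z β) x * W x γ * dphi φ x j δ *
              Rc P (φ x) α δ β γ)
            + ∑ p, ∑ q,
                P.ginv x i j * W x q * W x γ * dphi φ x i p * dphi φ x j δ *
                  P.ΓN (φ x) β p q * Rc P (φ x) α δ β γ) :=
        Finset.sum_congr rfl fun β _ => Finset.sum_congr rfl fun γ _ =>
          Finset.sum_congr rfl fun δ _ => expand β γ δ
    _ = (∑ β, ∑ γ, ∑ δ,
          P.ginv x i j * pd i (fun z => W z β) x * W x γ * dphi φ x j δ *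
            Rc P (φ x) α δ β γ)
          + ∑ β, ∑ γ, ∑ δ, ∑ p, ∑ q,
              P.ginv x i j * W x q * W x γ * dphi φ x i p * dphi φ x j δ *
                P.ΓN (φ x) β p q * Rc P (φ x) α δ β γ := by
        simp only [Finset.sum_add_distrib]
    _ = _ := by
        rw [sum5_comm fun β γ δ p q =>
          P.ginv x i j * W x q * W x γ * dphi φ x i p * dphi φ x j δ *
            P.ΓN (φ x) β p q * Rc P (φ x) α δ β γ]

lemma uvar_two (P : ChartData m n) (φ : (Fin m → ℝ) → Fin n → ℝ) (x : Fin m → ℝ)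
    (α : Fin n) :
    uvar P φ 2 x α
      = lap P (fun z => uvar P φ 1 z α) x + Asec P φ (uvar P φ 1) x α := rfl

lemma tauK_three (P : ChartData m n) (φ : (Fin m → ℝ) → Fin n → ℝ) (x : Fin m → ℝ)
    (α : Fin n) :
    tauK P φ 3 x α = lap P (fun z => uvar P φ 1 z α) x - F3 P φ x α := by
  have htau : tauK P φ 3 x α
      = uvar P φ 2 x α - trRphi P φ (uvar P φ 1) x α
        - trRD P φ (uvar P φ 0) (uvar P φ 0) x α := by
    unfold tauK
    rw [if_neg (by decide)]
    rw [show (3:ℕ) - 1 = 2 from rfl, show (3:ℕ) - 2 = 1 from rfl,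
      show (3:ℕ)/2 = 1 from rfl, show (1:ℕ) - 1 = 0 from rfl,
      show Finset.Icc 1 0 = (∅ : Finset ℕ) from by decide, Finset.sum_empty, sub_zero]
  rw [htau, uvar_two, trRphi_eq, trRD_eq]
  unfold F3
  simp only [vvar]
  ring

/-! #### Norm estimates -/

lemma vnorm_le_sum {ι : Type} [Fintype ι] (f : ι → ℝ) : vnorm f ≤ ∑ i, |f i| := by
  unfold vnorm
  have h1 : (∑ i, f i ^ 2) ≤ (∑ i, |f i|) ^ 2 := by
    have hstep : ∀ i ∈ Finset.univ (α := ι), f i ^ 2 ≤ |f i| * ∑ j, |f j| := by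
      intro i _
      rw [← sq_abs, sq]
      exact mul_le_mul_of_nonneg_left
        (Finset.single_le_sum (fun j _ => abs_nonneg (f j)) (Finset.mem_univ i))
        (abs_nonneg _)
    calc (∑ i, f i ^ 2) ≤ ∑ i, |f i| * ∑ j, |f j| := Finset.sum_le_sum hstep
      _ = (∑ i, |f i|) ^ 2 := by rw [← Finset.sum_mul, sq]
  calc Real.sqrt (∑ i, f i ^ 2) ≤ Real.sqrt ((∑ i, |f i|) ^ 2) := Real.sqrt_le_sqrt h1
    _ = ∑ i, |f i| := Real.sqrt_sq (Finset.sum_nonneg fun i _ => abs_nonneg _)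

lemma abs_sum_le {ι : Type*} [Fintype ι] {f g : ι → ℝ} (h : ∀ i, |f i| ≤ g i) :
    |∑ i, f i| ≤ ∑ i, g i :=
  (Finset.abs_sum_le_sum_abs f Finset.univ).trans (Finset.sum_le_sum fun i _ => h i)

lemma abs_prod_le {t c B : ℝ} (v : ℝ) (ht : t = v * c) (hv : |v| ≤ B) :
    |t| ≤ |c| * B := by
  rw [ht, abs_mul, mul_comm]
  exact mul_le_mul_of_nonneg_left hv (abs_nonneg c)

lemma final_comb {a s2 s3 s4 c1 c2 c3 c4 c5 G : ℝ}
    (ha : |a| ≤ (c1 + c2) * G) (h2 : |s2| ≤ c3 * G) (h3 : |s3| ≤ c4 * G)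
    (h4 : |s4| ≤ c5 * G) :
    |-a - s2 + s3 + s4| ≤ (c1 + c2 + c3 + c4 + c5) * G := by
  have e : -a - s2 + s3 + s4 = (-a + -s2) + (s3 + s4) := by ring
  rw [e]
  have t1 := abs_add_le (-a + -s2) (s3 + s4)
  have t2 := abs_add_le (-a) (-s2)
  have t3 := abs_add_le s3 s4
  rw [abs_neg, abs_neg] at t2
  nlinarith [abs_nonneg a, abs_nonneg s2]

/-- The right-hand side of the gradient estimate. -/
def Gfun (P : ChartData m n) (φ : (Fin m → ℝ) → Fin n → ℝ) (x : Fin m → ℝ) : ℝ :=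
  (∑ ϑ, (|uvar P φ 0 x ϑ| + |uvar P φ 1 x ϑ|))
    + (∑ i, ∑ ϑ, |vvar P φ 0 x i ϑ|) + ∑ i, ∑ ϑ, |vvar P φ 1 x i ϑ|

lemma Gfun_nonneg (P : ChartData m n) (φ : (Fin m → ℝ) → Fin n → ℝ) (x : Fin m → ℝ) :
    0 ≤ Gfun P φ x := by
  unfold Gfun
  positivity

lemma le_Gfun_u0 (P : ChartData m n) (φ : (Fin m → ℝ) → Fin n → ℝ) (x : Fin m → ℝ)
    (ϑ : Fin n) : |uvar P φ 0 x ϑ| ≤ Gfun P φ x := by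
  unfold Gfun
  have h1 : |uvar P φ 0 x ϑ| ≤ ∑ ϑ', (|uvar P φ 0 x ϑ'| + |uvar P φ 1 x ϑ'|) :=
    le_trans (le_add_of_nonneg_right (abs_nonneg _))
      (Finset.single_le_sum (f := fun ϑ' => |uvar P φ 0 x ϑ'| + |uvar P φ 1 x ϑ'|)
        (fun i _ => by positivity) (Finset.mem_univ ϑ))
  have h2 : (0:ℝ) ≤ ∑ i, ∑ ϑ', |vvar P φ 0 x i ϑ'| := by positivity
  have h3 : (0:ℝ) ≤ ∑ i, ∑ ϑ', |vvar P φ 1 x i ϑ'| := by positivity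
  linarith

lemma le_Gfun_u1 (P : ChartData m n) (φ : (Fin m → ℝ) → Fin n → ℝ) (x : Fin m → ℝ)
    (ϑ : Fin n) : |uvar P φ 1 x ϑ| ≤ Gfun P φ x := by
  unfold Gfun
  have h1 : |uvar P φ 1 x ϑ| ≤ ∑ ϑ', (|uvar P φ 0 x ϑ'| + |uvar P φ 1 x ϑ'|) :=
    le_trans (le_add_of_nonneg_left (abs_nonneg _))
      (Finset.single_le_sum (f := fun ϑ' => |uvar P φ 0 x ϑ'| + |uvar P φ 1 x ϑ'|)
        (fun i _ => by positivity) (Finset.mem_univ ϑ))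
  have h2 : (0:ℝ) ≤ ∑ i, ∑ ϑ', |vvar P φ 0 x i ϑ'| := by positivity
  have h3 : (0:ℝ) ≤ ∑ i, ∑ ϑ', |vvar P φ 1 x i ϑ'| := by positivity
  linarith

lemma le_Gfun_v (P : ChartData m n) (φ : (Fin m → ℝ) → Fin n → ℝ) (x : Fin m → ℝ)
    (j : ℕ) (i : Fin m) (ϑ : Fin n) :
    |vvar P φ j x i ϑ| ≤ ∑ i', ∑ ϑ', |vvar P φ j x i' ϑ'| := by
  have h1 : |vvar P φ j x i ϑ| ≤ ∑ ϑ', |vvar P φ j x i ϑ'| :=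
    Finset.single_le_sum (f := fun ϑ' => |vvar P φ j x i ϑ'|)
      (fun _ _ => abs_nonneg _) (Finset.mem_univ ϑ)
  have h2 : (∑ ϑ', |vvar P φ j x i ϑ'|) ≤ ∑ i', ∑ ϑ', |vvar P φ j x i' ϑ'| :=
    Finset.single_le_sum (f := fun i' => ∑ ϑ', |vvar P φ j x i' ϑ'|)
      (fun _ _ => by positivity) (Finset.mem_univ i)
  linarith

lemma le_Gfun_v0 (P : ChartData m n) (φ : (Fin m → ℝ) → Fin n → ℝ) (x : Fin m → ℝ)
    (i : Fin m) (ϑ : Fin n) : |vvar P φ 0 x i ϑ| ≤ Gfun P φ x := by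
  unfold Gfun
  have h1 := le_Gfun_v P φ x 0 i ϑ
  have h2 : (0:ℝ) ≤ ∑ ϑ', (|uvar P φ 0 x ϑ'| + |uvar P φ 1 x ϑ'|) := by positivity
  have h3 : (0:ℝ) ≤ ∑ i', ∑ ϑ', |vvar P φ 1 x i' ϑ'| := by positivity
  linarith

lemma le_Gfun_v1 (P : ChartData m n) (φ : (Fin m → ℝ) → Fin n → ℝ) (x : Fin m → ℝ)
    (i : Fin m) (ϑ : Fin n) : |vvar P φ 1 x i ϑ| ≤ Gfun P φ x := by
  unfold Gfun
  have h1 := le_Gfun_v P φ x 1 i ϑ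
  have h2 : (0:ℝ) ≤ ∑ ϑ', (|uvar P φ 0 x ϑ'| + |uvar P φ 1 x ϑ'|) := by positivity
  have h3 : (0:ℝ) ≤ ∑ i', ∑ ϑ', |vvar P φ 0 x i' ϑ'| := by positivity
  linarith

lemma le_Gfun_pd1 (P : ChartData m n) (φ : (Fin m → ℝ) → Fin n → ℝ) (x : Fin m → ℝ)
    (i : Fin m) (ϑ : Fin n) :
    |pd i (fun z => uvar P φ 1 z ϑ) x| ≤ Gfun P φ x :=
  le_Gfun_v1 P φ x i ϑ

/-- The coefficient function controlling `F³`. -/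
def Hfun (P : ChartData m n) (φ : (Fin m → ℝ) → Fin n → ℝ) (x : Fin m → ℝ) : ℝ :=
  ∑ α : Fin n,
    ((∑ ϑ, ∑ i, |(-2 * ∑ j, ∑ β, P.ginv x i j * dphi φ x j β * P.ΓN (φ x) α β ϑ)|)
      + (∑ ϑ, |(∑ β, lap P (fun z => φ z β) x * P.ΓN (φ x) α β ϑ)
            - ∑ i, ∑ j, ∑ β, ∑ ω,
                P.ginv x i j * dphi φ x j β * dphi φ x i ω * Scoef P (φ x) α β ω ϑ|)
      + (∑ i, ∑ j, ∑ ϑ, ∑ β, ∑ ω,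
          |P.ginv x i j * dphi φ x i β * dphi φ x j ω * Rc P (φ x) α ω β ϑ|)
      + (∑ i, ∑ j, ∑ β, ∑ ϑ, ∑ ω,
          |P.ginv x i j * uvar P φ 0 x ϑ * dphi φ x j ω * Rc P (φ x) α ω β ϑ|)
      + ∑ i, ∑ j, ∑ σ, ∑ ϑ, ∑ γ, ∑ ω, ∑ β,
          |P.ginv x i j * uvar P φ 0 x σ * dphi φ x i γ * dphi φ x j ω *
            P.ΓN (φ x) β γ σ * Rc P (φ x) α ω β ϑ|)

lemma F3_bound (P : ChartData m n) (φ : (Fin m → ℝ) → Fin n → ℝ) (x : Fin m → ℝ) :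
    vnorm (fun α : Fin n => F3 P φ x α) ≤ Hfun P φ x * Gfun P φ x := by
  refine le_trans (vnorm_le_sum _) ?_
  show (∑ α, |F3 P φ x α|) ≤ _
  unfold Hfun
  rw [Finset.sum_mul]
  refine Finset.sum_le_sum fun α _ => ?_
  have hba : |Asec P φ (uvar P φ 1) x α|
      ≤ ((∑ ϑ, ∑ i, |(-2 * ∑ j, ∑ β, P.ginv x i j * dphi φ x j β * P.ΓN (φ x) α β ϑ)|)
          + ∑ ϑ, |(∑ β, lap P (fun z => φ z β) x * P.ΓN (φ x) α β ϑ)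
              - ∑ i, ∑ j, ∑ β, ∑ ω,
                  P.ginv x i j * dphi φ x j β * dphi φ x i ω * Scoef P (φ x) α β ω ϑ|)
        * Gfun P φ x := by
    have e : Asec P φ (uvar P φ 1) x α
        = (∑ ϑ, ∑ i, pd i (fun z => uvar P φ 1 z ϑ) x *
            (-2 * ∑ j, ∑ β, P.ginv x i j * dphi φ x j β * P.ΓN (φ x) α β ϑ))
          + ∑ ϑ, uvar P φ 1 x ϑ *
              ((∑ β, lap P (fun z => φ z β) x * P.ΓN (φ x) α β ϑ)
                - ∑ i, ∑ j, ∑ β, ∑ ω,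
                    P.ginv x i j * dphi φ x j β * dphi φ x i ω * Scoef P (φ x) α β ω ϑ) := rfl
    rw [e]
    have B1 : |∑ ϑ, ∑ i, pd i (fun z => uvar P φ 1 z ϑ) x *
            (-2 * ∑ j, ∑ β, P.ginv x i j * dphi φ x j β * P.ΓN (φ x) α β ϑ)|
        ≤ (∑ ϑ, ∑ i, |(-2 * ∑ j, ∑ β, P.ginv x i j * dphi φ x j β * P.ΓN (φ x) α β ϑ)|)
            * Gfun P φ x := by
      simp only [Finset.sum_mul]
      exact abs_sum_le fun ϑ => abs_sum_le fun i =>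
        abs_prod_le (pd i (fun z => uvar P φ 1 z ϑ) x) rfl (le_Gfun_pd1 P φ x i ϑ)
    have B2 : |∑ ϑ, uvar P φ 1 x ϑ *
            ((∑ β, lap P (fun z => φ z β) x * P.ΓN (φ x) α β ϑ)
              - ∑ i, ∑ j, ∑ β, ∑ ω,
                  P.ginv x i j * dphi φ x j β * dphi φ x i ω * Scoef P (φ x) α β ω ϑ)|
        ≤ (∑ ϑ, |(∑ β, lap P (fun z => φ z β) x * P.ΓN (φ x) α β ϑ)
              - ∑ i, ∑ j, ∑ β, ∑ ω,
                  P.ginv x i j * dphi φ x j β * dphi φ x i ω * Scoef P (φ x) α β ω ϑ|)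
            * Gfun P φ x := by
      simp only [Finset.sum_mul]
      exact abs_sum_le fun ϑ =>
        abs_prod_le (uvar P φ 1 x ϑ) rfl (le_Gfun_u1 P φ x ϑ)
    refine (abs_add_le _ _).trans ?_
    have := add_le_add B1 B2
    nlinarith [this]
  have hb3 : |∑ i, ∑ j, ∑ ϑ, ∑ β, ∑ ω,
        P.ginv x i j * uvar P φ 1 x ϑ * dphi φ x i β * dphi φ x j ω *
          Rc P (φ x) α ω β ϑ|
      ≤ (∑ i, ∑ j, ∑ ϑ, ∑ β, ∑ ω,
          |P.ginv x i j * dphi φ x i β * dphi φ x j ω * Rc P (φ x) α ω β ϑ|)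
          * Gfun P φ x := by
    simp only [Finset.sum_mul]
    exact abs_sum_le fun i => abs_sum_le fun j => abs_sum_le fun ϑ =>
      abs_sum_le fun β => abs_sum_le fun ω =>
        abs_prod_le (uvar P φ 1 x ϑ) (by ring) (le_Gfun_u1 P φ x ϑ)
  have hb4 : |∑ i, ∑ j, ∑ β, ∑ ϑ, ∑ ω,
        P.ginv x i j * vvar P φ 0 x i β * uvar P φ 0 x ϑ * dphi φ x j ω *
          Rc P (φ x) α ω β ϑ|
      ≤ (∑ i, ∑ j, ∑ β, ∑ ϑ, ∑ ω,
          |P.ginv x i j * uvar P φ 0 x ϑ * dphi φ x j ω * Rc P (φ x) α ω β ϑ|)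
          * Gfun P φ x := by
    simp only [Finset.sum_mul]
    exact abs_sum_le fun i => abs_sum_le fun j => abs_sum_le fun β =>
      abs_sum_le fun ϑ => abs_sum_le fun ω =>
        abs_prod_le (vvar P φ 0 x i β) (by ring) (le_Gfun_v0 P φ x i β)
  have hb5 : |∑ i, ∑ j, ∑ σ, ∑ ϑ, ∑ γ, ∑ ω, ∑ β,
        P.ginv x i j * uvar P φ 0 x σ * uvar P φ 0 x ϑ * dphi φ x i γ *
          dphi φ x j ω * P.ΓN (φ x) β γ σ * Rc P (φ x) α ω β ϑ|
      ≤ (∑ i, ∑ j, ∑ σ, ∑ ϑ, ∑ γ, ∑ ω, ∑ β,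
          |P.ginv x i j * uvar P φ 0 x σ * dphi φ x i γ * dphi φ x j ω *
            P.ΓN (φ x) β γ σ * Rc P (φ x) α ω β ϑ|)
          * Gfun P φ x := by
    simp only [Finset.sum_mul]
    exact abs_sum_le fun i => abs_sum_le fun j => abs_sum_le fun σ =>
      abs_sum_le fun ϑ => abs_sum_le fun γ => abs_sum_le fun ω => abs_sum_le fun β =>
        abs_prod_le (uvar P φ 0 x ϑ) (by ring) (le_Gfun_u0 P φ x ϑ)
  unfold F3
  exact final_comb hba hb3 hb4 hb5

/-! #### Smoothness -/

lemma contDiff_lap (P : ChartData m n) (hdom : P.SmoothDomain)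
    {f : (Fin m → ℝ) → ℝ} (hf : ContDiff ℝ (⊤ : ℕ∞) f) :
    ContDiff ℝ (⊤ : ℕ∞) (lap P f) := by
  have h : lap P f = fun x =>
      -((∑ i, ∑ j, P.ginv x i j * pd i (fun z => pd j f z) x)
        - ∑ i, ∑ j, ∑ k, P.ginv x i j * P.ΓM x k i j * pd k f x) := rfl
  rw [h]
  refine ContDiff.neg (ContDiff.sub ?_ ?_)
  · exact ContDiff.sum fun i _ => ContDiff.sum fun j _ =>
      (hdom.1 i j).mul (contDiff_pd (contDiff_pd hf j) i)
  · exact ContDiff.sum fun i _ => ContDiff.sum fun j _ => ContDiff.sum fun k _ =>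
      ((hdom.1 i j).mul (hdom.2 k i j)).mul (contDiff_pd hf k)

lemma contDiff_dphi {φ : (Fin m → ℝ) → Fin n → ℝ} (hφ : ContDiff ℝ (⊤ : ℕ∞) φ)
    (i : Fin m) (β : Fin n) : ContDiff ℝ (⊤ : ℕ∞) fun x => dphi φ x i β :=
  contDiff_pd (contDiff_pi.1 hφ β) i

lemma contDiff_Scoefφ (P : ChartData m n) (htar : P.SmoothTarget)
    {φ : (Fin m → ℝ) → Fin n → ℝ} (hφ : ContDiff ℝ (⊤ : ℕ∞) φ) (a b c d : Fin n) :
    ContDiff ℝ (⊤ : ℕ∞) fun x => Scoef P (φ x) a b c d := by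
  unfold Scoef
  refine ContDiff.div_const ?_ 2
  refine ContDiff.add (ContDiff.add (ContDiff.add ?_ ?_) ?_) ?_
  · exact (contDiff_pd (htar a b d) c).comp hφ
  · exact ContDiff.sum fun γ _ => ((htar γ b d).comp hφ).mul ((htar a c γ).comp hφ)
  · exact (contDiff_pd (htar a c d) b).comp hφ
  · exact ContDiff.sum fun γ _ => ((htar γ c d).comp hφ).mul ((htar a b γ).comp hφ)

lemma contDiff_Rcφ (P : ChartData m n) (htar : P.SmoothTarget)
    {φ : (Fin m → ℝ) → Fin n → ℝ} (hφ : ContDiff ℝ (⊤ : ℕ∞) φ) (a d b c : Fin n) :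
    ContDiff ℝ (⊤ : ℕ∞) fun x => Rc P (φ x) a d b c := by
  unfold Rc
  refine ContDiff.add (ContDiff.sub ?_ ?_) ?_
  · exact (contDiff_pd (htar a c d) b).comp hφ
  · exact (contDiff_pd (htar a b d) c).comp hφ
  · exact ContDiff.sum fun μ _ =>
      (((htar a b μ).comp hφ).mul ((htar μ c d).comp hφ)).sub
        (((htar a c μ).comp hφ).mul ((htar μ b d).comp hφ))

lemma contDiff_tension (P : ChartData m n) (hdom : P.SmoothDomain)
    (htar : P.SmoothTarget) {φ : (Fin m → ℝ) → Fin n → ℝ}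
    (hφ : ContDiff ℝ (⊤ : ℕ∞) φ) (α : Fin n) :
    ContDiff ℝ (⊤ : ℕ∞) fun x => tension P φ x α := by
  unfold tension
  refine ContDiff.add ?_ ?_
  · exact (contDiff_lap P hdom (contDiff_pi.1 hφ α)).neg
  · exact ContDiff.sum fun i _ => ContDiff.sum fun j _ => ContDiff.sum fun ϑ _ =>
      ContDiff.sum fun β _ =>
        (((hdom.1 i j).mul ((htar α ϑ β).comp hφ)).mul (contDiff_dphi hφ i ϑ)).mul
          (contDiff_dphi hφ j β)

lemma Hfun_continuous (P : ChartData m n) (hdom : P.SmoothDomain)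
    (htar : P.SmoothTarget) {φ : (Fin m → ℝ) → Fin n → ℝ}
    (hφ : ContDiff ℝ (⊤ : ℕ∞) φ) : Continuous (Hfun P φ) := by
  have hg : ∀ i j, Continuous fun x => P.ginv x i j := fun i j => (hdom.1 i j).continuous
  have hd : ∀ i β, Continuous fun x => dphi φ x i β := fun i β =>
    (contDiff_dphi hφ i β).continuous
  have hΓ : ∀ a b c, Continuous fun x => P.ΓN (φ x) a b c := fun a b c =>
    ((htar a b c).comp hφ).continuous
  have hlap : ∀ β, Continuous fun x => lap P (fun z => φ z β) x := fun β =>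
    (contDiff_lap P hdom (contDiff_pi.1 hφ β)).continuous
  have hS : ∀ a b c d, Continuous fun x => Scoef P (φ x) a b c d := fun a b c d =>
    (contDiff_Scoefφ P htar hφ a b c d).continuous
  have hR : ∀ a b c d, Continuous fun x => Rc P (φ x) a b c d := fun a b c d =>
    (contDiff_Rcφ P htar hφ a b c d).continuous
  have hu : ∀ ϑ, Continuous fun x => uvar P φ 0 x ϑ := fun ϑ =>
    (contDiff_tension P hdom htar hφ ϑ).continuous
  unfold Hfun
  refine continuous_finset_sum _ fun α _ => ?_
  refine ((((Continuous.add ?_ ?_).add ?_).add ?_).add ?_)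
  · exact continuous_finset_sum _ fun ϑ _ => continuous_finset_sum _ fun i _ =>
      (Continuous.mul continuous_const (continuous_finset_sum _ fun j _ =>
        continuous_finset_sum _ fun β _ => ((hg i j).mul (hd j β)).mul (hΓ α β ϑ))).abs
  · exact continuous_finset_sum _ fun ϑ _ =>
      ((continuous_finset_sum _ fun β _ => (hlap β).mul (hΓ α β ϑ)).sub
        (continuous_finset_sum _ fun i _ => continuous_finset_sum _ fun j _ =>
          continuous_finset_sum _ fun β _ => continuous_finset_sum _ fun ω _ =>
            (((hg i j).mul (hd j β)).mul (hd i ω)).mul (hS α β ω ϑ))).abs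
  · exact continuous_finset_sum _ fun i _ => continuous_finset_sum _ fun j _ =>
      continuous_finset_sum _ fun ϑ _ => continuous_finset_sum _ fun β _ =>
        continuous_finset_sum _ fun ω _ =>
          ((((hg i j).mul (hd i β)).mul (hd j ω)).mul (hR α ω β ϑ)).abs
  · exact continuous_finset_sum _ fun i _ => continuous_finset_sum _ fun j _ =>
      continuous_finset_sum _ fun β _ => continuous_finset_sum _ fun ϑ _ =>
        continuous_finset_sum _ fun ω _ =>
          ((((hg i j).mul (hu ϑ)).mul (hd j ω)).mul (hR α ω β ϑ)).abs
  · exact continuous_finset_sum _ fun i _ => continuous_finset_sum _ fun j _ =>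
      continuous_finset_sum _ fun σ _ => continuous_finset_sum _ fun ϑ _ =>
        continuous_finset_sum _ fun γ _ => continuous_finset_sum _ fun ω _ =>
          continuous_finset_sum _ fun β _ =>
            (((((hg i j).mul (hu σ)).mul (hd i γ)).mul (hd j ω)).mul
              (hΓ β γ σ)).mul (hR α ω β ϑ) |>.abs

end Aux

/-- For a `3`-harmonic map `φ : M → N` in local charts, the equation
`τ₃(φ) = 0` is locally equivalent to the system `Δu₁^α = (F³)^α`, and on any open
set `D` with compact closure contained in the chart domain `U` there is `C > 0` with
`|F³| ≤ C( Σ_ϑ(|u₀^ϑ| + |u₁^ϑ|) + Σ_{i,ϑ}|v₀ᵢ^ϑ| + Σ_{i,ϑ}|∂u₁^ϑ/∂x^i| )`. -/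
theorem triharmonic_local_equation_and_estimate
    {m n : ℕ} (P : ChartData m n)
    (hPdom : P.SmoothDomain) (hPtar : P.SmoothTarget) (hPriem : P.Riemannian)
    (U : Set (Fin m → ℝ)) (hUopen : IsOpen U)
    (φ : (Fin m → ℝ) → Fin n → ℝ) (hφ : ContDiff ℝ (⊤ : ℕ∞) φ)
    (hpoly : ∀ x ∈ U, ∀ α, tauK P φ 3 x α = 0) :
    (∀ x ∈ U, ∀ α : Fin n,
      (tauK P φ 3 x α = 0 ↔ lap P (fun z => uvar P φ 1 z α) x = F3 P φ x α))
    ∧ ∀ D : Set (Fin m → ℝ), IsOpen D → IsCompact (closure D) → closure D ⊆ U →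
        ∃ C > 0, ∀ x ∈ D,
          vnorm (fun α : Fin n => F3 P φ x α)
            ≤ C * ((∑ ϑ, (|uvar P φ 0 x ϑ| + |uvar P φ 1 x ϑ|))
              + (∑ i, ∑ ϑ, |vvar P φ 0 x i ϑ|)
              + ∑ i, ∑ ϑ, |vvar P φ 1 x i ϑ|) := by
  constructor
  · intro x _ α
    rw [tauK_three, sub_eq_zero]
  · intro D _ hKc hDU
    obtain ⟨M, hM⟩ := hKc.exists_bound_of_continuousOn
      (Hfun_continuous P hPdom hPtar hφ).continuousOn
    refine ⟨max M 0 + 1, by positivity, fun x hx => ?_⟩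
    have hx' : x ∈ closure D := subset_closure hx
    have h1 : Hfun P φ x ≤ max M 0 + 1 := by
      have h2 := hM x hx'
      rw [Real.norm_eq_abs] at h2
      have h3 := le_abs_self (Hfun P φ x)
      have h4 := le_max_left M 0
      linarith
    calc vnorm (fun α : Fin n => F3 P φ x α)
        ≤ Hfun P φ x * Gfun P φ x := F3_bound P φ x
      _ ≤ (max M 0 + 1) * Gfun P φ x :=
          mul_le_mul_of_nonneg_right h1 (Gfun_nonneg P φ x)
      _ = (max M 0 + 1) * ((∑ ϑ, (|uvar P φ 0 x ϑ| + |uvar P φ 1 x ϑ|))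
            + (∑ i, ∑ ϑ, |vvar P φ 0 x i ϑ|)
            + ∑ i, ∑ ϑ, |vvar P φ 1 x i ϑ|) := rfl

end Polyharm
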